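/- One-step monotonicity bound: with the hypotheses and notation of the scheme above (CFL condition satisfied, $g' \geq 0$, $v' \leq 0$, $\gamma_k$ non-increasing non-negative summing to 1, $\rho_j^n \in [\rho_m,\rho_M]$ for all $j$), for each $j$ one has $V_{j-1/2}^n g(\rho_M) - V_{j+1/2}^n g(\rho_j^n) \leq (\gamma_0\|v'\|\|g\| + \|v\|\|g'\|)(\rho_M - \rho_j^n)$. -/

import Mathlib

/-!
Split `V⁻ g(ρ_M) - V⁺ g(ρ_j) = V⁻ (g(ρ_M) - g(ρ_j)) + (V⁻ - V⁺) g(ρ_j)`. Since `V⁻` is a convex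
combination of values of `v`, the mean value theorem bounds the first term by
`‖v‖ ‖g'‖ (ρ_M - ρ_j)`. For the second, `v` is non-increasing and `ρ ≤ ρ_M`, so the
`w_k = v(ρ_{j+k}) - v(ρ_M)` are nonnegative, and summation by parts against the non-increasing
weights `γ_k` gives `V⁻ - V⁺ ≤ γ_0 (v(ρ_j) - v(ρ_M)) ≤ γ_0 ‖v'‖ (ρ_M - ρ_j)`.
-/

noncomputable def supAbs (f : ℝ → ℝ) (s : Set ℝ) : ℝ :=
  sSup ((fun x => |f x|) '' s)

open Finset Set

lemma abs_le_supAbs {f : ℝ → ℝ} {a b : ℝ} (hf : ContinuousOn f (Icc a b))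
    {x : ℝ} (hx : x ∈ Icc a b) : |f x| ≤ supAbs f (Icc a b) :=
  le_csSup (isCompact_Icc.bddAbove_image hf.abs) ⟨x, hx, rfl⟩

lemma supAbs_nonneg {f : ℝ → ℝ} {a b : ℝ} (hf : ContinuousOn f (Icc a b))
    {x : ℝ} (hx : x ∈ Icc a b) : 0 ≤ supAbs f (Icc a b) :=
  (abs_nonneg _).trans (abs_le_supAbs hf hx)

lemma abs_sub_le_supAbs_deriv_mul {f f' : ℝ → ℝ} {a b : ℝ}
    (hf : ∀ x ∈ Icc a b, HasDerivAt f (f' x) x) (hf' : ContinuousOn f' (Icc a b))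
    {x y : ℝ} (hx : x ∈ Icc a b) (hy : y ∈ Icc a b) (hxy : x ≤ y) :
    |f y - f x| ≤ supAbs f' (Icc a b) * (y - x) := by
  have := (convex_Icc a b).norm_image_sub_le_of_norm_hasDerivWithin_le
    (fun z hz => (hf z hz).hasDerivWithinAt) (fun z hz => abs_le_supAbs hf' hz) hx hy
  rwa [Real.norm_eq_abs, Real.norm_eq_abs, abs_of_nonneg (sub_nonneg.2 hxy)] at this

lemma abs_sum_mul_le_of_sum_eq_one {ι : Type*} {s : Finset ι} {γ a : ι → ℝ} {C : ℝ}
    (hγ : ∀ k ∈ s, 0 ≤ γ k) (hγ_sum : ∑ k ∈ s, γ k = 1) (ha : ∀ k ∈ s, |a k| ≤ C) :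
    |∑ k ∈ s, γ k * a k| ≤ C :=
  calc |∑ k ∈ s, γ k * a k|
      ≤ ∑ k ∈ s, γ k * |a k| := by
        refine (abs_sum_le_sum_abs _ _).trans (sum_le_sum fun k hk => ?_)
        rw [abs_mul, abs_of_nonneg (hγ k hk)]
    _ ≤ ∑ k ∈ s, γ k * C := sum_le_sum fun k hk => mul_le_mul_of_nonneg_left (ha k hk) (hγ k hk)
    _ = C := by rw [← sum_mul, hγ_sum, one_mul]

lemma sum_mul_sub_succ_add_le {γ w : ℕ → ℝ} (n : ℕ) (hγ : ∀ k < n, γ (k + 1) ≤ γ k)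
    (hw : ∀ k, 0 ≤ w k) :
    ∑ k ∈ range n, γ k * (w k - w (k + 1)) + γ n * w n ≤ γ 0 * w 0 := by
  induction n with
  | zero => simp
  | succ n ih =>
    have hstep : γ (n + 1) * w (n + 1) ≤ γ n * w (n + 1) :=
      mul_le_mul_of_nonneg_right (hγ n n.lt_succ_self) (hw _)
    have := ih fun k hk => hγ k (hk.trans n.lt_succ_self)
    rw [sum_range_succ]
    linarith

lemma sum_mul_sub_sum_mul_succ_le {γ a : ℕ → ℝ} {b : ℝ} {N : ℕ} (hN : 1 ≤ N)
    (hγ_nonneg : ∀ k < N, 0 ≤ γ k) (hγ_mono : ∀ k, k + 1 < N → γ (k + 1) ≤ γ k)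
    (ha : ∀ k, b ≤ a k) :
    ∑ k ∈ range N, γ k * a k - ∑ k ∈ range N, γ k * a (k + 1) ≤ γ 0 * (a 0 - b) := by
  obtain ⟨n, rfl⟩ := Nat.exists_eq_add_of_le' hN
  have hparts := sum_mul_sub_succ_add_le (w := fun k => a k - b) n
    (fun k hk => hγ_mono k (by omega)) (fun k => sub_nonneg.2 (ha k))
  have hlast : 0 ≤ γ n * (a (n + 1) - b) :=
    mul_nonneg (hγ_nonneg n n.lt_succ_self) (sub_nonneg.2 (ha _))
  rw [← sum_sub_distrib, sum_range_succ]
  simp only [← mul_sub, sub_sub_sub_cancel_right] at hparts ⊢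
  linarith

lemma antitoneOn_of_hasDerivAt_nonpos {D : Set ℝ} (hD : Convex ℝ D) {f f' : ℝ → ℝ}
    (hf : ∀ x ∈ D, HasDerivAt f (f' x) x) (hf' : ∀ x ∈ D, f' x ≤ 0) : AntitoneOn f D :=
  antitoneOn_of_hasDerivWithinAt_nonpos hD (HasDerivAt.continuousOn hf)
    (fun x hx => (hf x (interior_subset hx)).hasDerivWithinAt)
    (fun x hx => hf' x (interior_subset hx))

theorem one_step_monotonicity_bound_general
    (ρmax : ℝ)
    (g g' v v' : ℝ → ℝ)
    (hg_deriv : ∀ x ∈ Set.Icc (0:ℝ) ρmax, HasDerivAt g (g' x) x)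
    (hg'_cont : ContinuousOn g' (Set.Icc 0 ρmax))
    (hg_nonneg : ∀ x ∈ Set.Icc (0:ℝ) ρmax, 0 ≤ g x)
    (hv_deriv : ∀ x ∈ Set.Icc (0:ℝ) ρmax, HasDerivAt v (v' x) x)
    (hv'_cont : ContinuousOn v' (Set.Icc 0 ρmax))
    (hv'_nonpos : ∀ x ∈ Set.Icc (0:ℝ) ρmax, v' x ≤ 0)
    (N : ℕ) (hN : 1 ≤ N) (γ : ℕ → ℝ)
    (hγ_nonneg : ∀ k < N, 0 ≤ γ k)
    (hγ_mono : ∀ k, k + 1 < N → γ (k + 1) ≤ γ k)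
    (hγ_sum : ∑ k ∈ Finset.range N, γ k = 1)
    (ρm ρM : ℝ) (hρm : 0 ≤ ρm) (hρM : ρM ≤ ρmax)
    (ρ : ℤ → ℝ) (hρ : ∀ j, ρ j ∈ Set.Icc ρm ρM)
    (Vminus Vplus : ℤ → ℝ)
    (hVm : ∀ j, Vminus j = ∑ k ∈ Finset.range N, γ k * v (ρ (j + k)))
    (hVp : ∀ j, Vplus j = ∑ k ∈ Finset.range N, γ k * v (ρ (j + k + 1))) :
    ∀ j : ℤ, Vminus j * g ρM - Vplus j * g (ρ j) ≤
      (γ 0 * supAbs v' (Set.Icc 0 ρmax) * supAbs g (Set.Icc 0 ρmax)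
        + supAbs v (Set.Icc 0 ρmax) * supAbs g' (Set.Icc 0 ρmax)) * (ρM - ρ j) := by
  intro j
  set I := Icc (0:ℝ) ρmax
  have hρI (i : ℤ) : ρ i ∈ I := ⟨hρm.trans (hρ i).1, (hρ i).2.trans hρM⟩
  have hjM : ρ j ≤ ρM := (hρ j).2
  have hMI : ρM ∈ I := ⟨(hρI j).1.trans hjM, hρM⟩
  have hV_abs : |Vminus j| ≤ supAbs v I := hVm j ▸
    abs_sum_mul_le_of_sum_eq_one (fun k hk => hγ_nonneg k (mem_range.1 hk)) hγ_sum
      fun k _ => abs_le_supAbs (HasDerivAt.continuousOn hv_deriv) (hρI _)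
  have hV_diff : Vminus j - Vplus j ≤ γ 0 * (v (ρ j) - v ρM) := by
    have hv_anti := antitoneOn_of_hasDerivAt_nonpos (convex_Icc 0 ρmax) hv_deriv hv'_nonpos
    have := sum_mul_sub_sum_mul_succ_le (a := fun k : ℕ => v (ρ (j + k))) hN hγ_nonneg hγ_mono
      fun k => hv_anti (hρI _) hMI (hρ _).2
    simpa only [hVm, hVp, Nat.cast_succ, add_assoc, Nat.cast_zero, add_zero] using this
  have hg_term : Vminus j * (g ρM - g (ρ j)) ≤ supAbs v I * (supAbs g' I * (ρM - ρ j)) :=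
    calc _ ≤ |Vminus j| * |g ρM - g (ρ j)| := (le_abs_self _).trans (abs_mul _ _).le
      _ ≤ _ := mul_le_mul hV_abs (abs_sub_le_supAbs_deriv_mul hg_deriv hg'_cont (hρI j) hMI hjM)
          (abs_nonneg _) (supAbs_nonneg (HasDerivAt.continuousOn hv_deriv) hMI)
  have hv_term : (Vminus j - Vplus j) * g (ρ j) ≤
      γ 0 * (supAbs v' I * (ρM - ρ j)) * supAbs g I := by
    have hv_change := abs_sub_le_supAbs_deriv_mul hv_deriv hv'_cont (hρI j) hMI hjM
    have := supAbs_nonneg hv'_cont hMI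
    have := hγ_nonneg 0 hN
    calc _ ≤ γ 0 * (v (ρ j) - v ρM) * g (ρ j) :=
          mul_le_mul_of_nonneg_right hV_diff (hg_nonneg _ (hρI j))
      _ ≤ _ := by
          gcongr
          · exact hg_nonneg _ (hρI j)
          · exact (le_abs_self _).trans ((abs_sub_comm _ _).trans_le hv_change)
          · exact (le_abs_self _).trans (abs_le_supAbs (HasDerivAt.continuousOn hg_deriv) (hρI j))
  calc Vminus j * g ρM - Vplus j * g (ρ j)
      = Vminus j * (g ρM - g (ρ j)) + (Vminus j - Vplus j) * g (ρ j) := by ring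
    _ ≤ _ := add_le_add hg_term hv_term
    _ = _ := by ring

theorem one_step_monotonicity_bound
    (ρmax : ℝ) (hρmax : 0 < ρmax)
    (g g' v v' : ℝ → ℝ)
    (hg_deriv : ∀ x ∈ Set.Icc (0:ℝ) ρmax, HasDerivAt g (g' x) x)
    (hg'_cont : ContinuousOn g' (Set.Icc 0 ρmax))
    (hg_nonneg : ∀ x ∈ Set.Icc (0:ℝ) ρmax, 0 ≤ g x)
    (hg'_nonneg : ∀ x ∈ Set.Icc (0:ℝ) ρmax, 0 ≤ g' x)
    (hv_deriv : ∀ x ∈ Set.Icc (0:ℝ) ρmax, HasDerivAt v (v' x) x)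
    (hv'_cont : ContinuousOn v' (Set.Icc 0 ρmax))
    (hv_nonneg : ∀ x ∈ Set.Icc (0:ℝ) ρmax, 0 ≤ v x)
    (hv'_nonpos : ∀ x ∈ Set.Icc (0:ℝ) ρmax, v' x ≤ 0)
    (N : ℕ) (hN : 1 ≤ N) (γ : ℕ → ℝ)
    (hγ_nonneg : ∀ k < N, 0 ≤ γ k)
    (hγ_mono : ∀ k, k + 1 < N → γ (k + 1) ≤ γ k)
    (hγ_sum : ∑ k ∈ Finset.range N, γ k = 1)
    (lam : ℝ) (hlam : 0 < lam)
    (hCFL : lam * (γ 0 * supAbs v' (Set.Icc 0 ρmax) * supAbs g (Set.Icc 0 ρmax)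
        + supAbs v (Set.Icc 0 ρmax) * supAbs g' (Set.Icc 0 ρmax)) ≤ 1)
    (ρm ρM : ℝ) (hρm : 0 ≤ ρm) (hρM : ρM ≤ ρmax)
    (ρ : ℤ → ℝ) (hρ : ∀ j, ρ j ∈ Set.Icc ρm ρM)
    (Vminus Vplus : ℤ → ℝ)
    (hVm : ∀ j, Vminus j = ∑ k ∈ Finset.range N, γ k * v (ρ (j + k)))
    (hVp : ∀ j, Vplus j = ∑ k ∈ Finset.range N, γ k * v (ρ (j + k + 1))) :
    ∀ j : ℤ, Vminus j * g ρM - Vplus j * g (ρ j) ≤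
      (γ 0 * supAbs v' (Set.Icc 0 ρmax) * supAbs g (Set.Icc 0 ρmax)
        + supAbs v (Set.Icc 0 ρmax) * supAbs g' (Set.Icc 0 ρmax)) * (ρM - ρ j) :=
  one_step_monotonicity_bound_general ρmax g g' v v' hg_deriv hg'_cont hg_nonneg hv_deriv hv'_cont
    hv'_nonpos N hN γ hγ_nonneg hγ_mono hγ_sum ρm ρM hρm hρM ρ hρ Vminus Vplus hVm hVp
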